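/- Let R = ℚ[z₁,…,z_m] be the polynomial ring in m variables, let k ≥ 1, and let a, b : {1,…,k} → R satisfy Σᵢ aᵢbᵢ = 0. Suppose that for some index j the entry bⱼ equals z₁ − c, where c ∈ ℚ[z₂,…,z_m] does not involve z₁, and let π : R → R' = ℚ[z₂,…,z_m] be the ℚ-algebra homomorphism with π(z₁) = c and π(zᵢ) = zᵢ for i ≥ 2. Let M = K(a,b) be the folded Koszul complex over R, regarded as a ℤ/2-graded complex of R'-modules, and let M' be the folded Koszul complex over R' whose rows are (π(aᵢ), π(bᵢ)) for i ≠ j (one has Σ_{i≠j} π(aᵢ)π(bᵢ) = 0 since π(bⱼ) = 0). Then the R'-linear map Φ : M → M' defined on basis elements by Φ(u·e_ε) = π(u)·e_{ε′} if εⱼ = 0 (where ε′ ∈ {0,1}^{k−1} is ε with its j-th coordinate deleted) and Φ(u·e_ε) = 0 if εⱼ = 1 (u ∈ R), is a chain map of ℤ/2-graded complexes and is a quasi-isomorphism: it induces isomorphisms of R'-modules on the homology in both ℤ/2-degrees. -/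

import Mathlib

open Finset

/-- The sign `(−1)^{ε₁+⋯+ε_{i−1}}` appearing in the Koszul differential. -/
def koszulSign (R : Type*) [CommRing R] {k : ℕ} (i : Fin k) (ε : Fin k → Bool) : R :=
  (-1 : R) ^ ((Finset.univ.filter (fun l : Fin k => l < i ∧ ε l = true)).card)

/-- The entry `tᵢ(ε)`: `aᵢ` if `εᵢ = 0`, `bᵢ` if `εᵢ = 1`. -/
def koszulEntry {R : Type*} [CommRing R] {k : ℕ} (a b : Fin k → R) (i : Fin k)
    (ε : Fin k → Bool) : R :=
  if ε i then b i else a i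

/-- `ε ⊕ δᵢ`: flip the `i`-th coordinate of `ε`. -/
def flipAt {k : ℕ} (i : Fin k) (ε : Fin k → Bool) : Fin k → Bool :=
  Function.update ε i (!ε i)

/-- The differential of the folded Koszul complex `K(a,b)` on the free module with
basis `{e_ε : ε ∈ {0,1}^k}`, realized as `(Fin k → Bool) → R`:
`d(e_ε) = Σᵢ (−1)^{ε₁+⋯+ε_{i−1}} tᵢ(ε) e_{ε⊕δᵢ}`. -/
noncomputable def koszulD {R : Type*} [CommRing R] {k : ℕ} (a b : Fin k → R) :
    ((Fin k → Bool) → R) →ₗ[R] ((Fin k → Bool) → R) where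
  toFun f := fun η => ∑ i : Fin k,
    koszulSign R i (flipAt i η) * koszulEntry a b i (flipAt i η) * f (flipAt i η)
  map_add' f g := by
    funext η
    simp only [Pi.add_apply, mul_add]
    rw [Finset.sum_add_distrib]
  map_smul' r f := by
    funext η
    simp only [Pi.smul_apply, smul_eq_mul, RingHom.id_apply]
    rw [Finset.mul_sum]
    exact Finset.sum_congr rfl fun i _ => by ring

/-- The parity of `ε ∈ {0,1}^k`, as an element of `ℤ/2`. -/
def bparity {k : ℕ} (ε : Fin k → Bool) : ZMod 2 :=
  ((Finset.univ.filter (fun i : Fin k => ε i = true)).card : ZMod 2)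

/-- The degree-`p` graded part of the folded Koszul complex: functions supported on
basis elements `e_ε` with `ε` of parity `p`. -/
def gradedPart (R : Type*) [CommRing R] {k : ℕ} (p : ZMod 2) :
    Submodule R ((Fin k → Bool) → R) where
  carrier := {f | ∀ ε, bparity ε ≠ p → f ε = 0}
  add_mem' := by
    intro f g hf hg ε hε
    simp [hf ε hε, hg ε hε]
  zero_mem' := by
    intro ε _
    rfl
  smul_mem' := by
    intro r f hf ε hε
    simp [hf ε hε]

/-- Cycles of degree `p`: kernel of the differential intersected with the graded part. -/
noncomputable def koszulCycles {R : Type*} [CommRing R] {k : ℕ} (a b : Fin k → R)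
    (p : ZMod 2) : Submodule R ((Fin k → Bool) → R) :=
  LinearMap.ker (koszulD a b) ⊓ gradedPart R p

/-- Boundaries of degree `p`: image of the degree-`(p+1)` part under the differential. -/
noncomputable def koszulBoundaries {R : Type*} [CommRing R] {k : ℕ} (a b : Fin k → R)
    (p : ZMod 2) : Submodule R ((Fin k → Bool) → R) :=
  Submodule.map (koszulD a b) (gradedPart R (p + 1))

/-- The homology of the folded Koszul complex in `ℤ/2`-degree `p`. -/
noncomputable abbrev KoszulHomology {R : Type*} [CommRing R] {k : ℕ} (a b : Fin k → R)
    (p : ZMod 2) :=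
  koszulCycles a b p ⧸ ((koszulBoundaries a b p).comap (koszulCycles a b p).subtype)
open MvPolynomial

/-- The `ℚ`-algebra homomorphism `π : ℚ[z₁,…,z_{m+1}] → ℚ[z₂,…,z_{m+1}]` sending the
first variable `z₁` to `c` and fixing the remaining variables (here `ℚ[z₂,…,z_{m+1}]`
is modeled as `MvPolynomial (Fin m) ℚ`, with the inclusion into `MvPolynomial (Fin (m+1)) ℚ`
given by `rename Fin.succ`). -/
noncomputable def elimHom (m : ℕ) (c : MvPolynomial (Fin m) ℚ) :
    MvPolynomial (Fin (m + 1)) ℚ →ₐ[ℚ] MvPolynomial (Fin m) ℚ :=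
  MvPolynomial.aeval (Fin.cases c MvPolynomial.X)

/-- The map `Φ : K(a,b) → M'` defined on basis elements by
`Φ(u·e_ε) = π(u)·e_{ε'}` if `εⱼ = 0` (where `ε'` is `ε` with its `j`-th coordinate
deleted) and `Φ(u·e_ε) = 0` if `εⱼ = 1`. -/
noncomputable def elimPhi (m k : ℕ) (c : MvPolynomial (Fin m) ℚ) (j : Fin (k + 1))
    (f : (Fin (k + 1) → Bool) → MvPolynomial (Fin (m + 1)) ℚ) :
    (Fin k → Bool) → MvPolynomial (Fin m) ℚ :=
  fun ε => elimHom m c (f (j.insertNth false ε))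

/-!
Write `w = bⱼ = z₁ − c`: `π` is surjective with kernel `(w)`, and `w` is a non-zero-divisor.
Hence `ker Φ` consists of the chains whose `εⱼ = 0` face is divisible by `w`, and every cycle of
this kind is a boundary: dividing the face by `w` and moving it to the `εⱼ = 1` face yields a
chain whose boundary agrees with the cycle on the `εⱼ = 0` face, and a cycle vanishing there
vanishes altogether, because `d` maps the `εⱼ = 1` face onto the `εⱼ = 0` face by multiplication
with `±w`. Together with lifting chains along `Φ`, this gives injectivity and surjectivity of `Φ`
on homology.
-/

lemma Finset.sum_sum_eq_sum_diag_of_antisymm {ι M : Type*} [Fintype ι] [DecidableEq ι]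
    [AddCommGroup M] (T : ι → ι → M) (hT : ∀ i l, i ≠ l → T i l = -T l i) :
    ∑ i, ∑ l, T i l = ∑ i, T i i := by
  have hoff : ∑ x : ι × ι, (if x.1 = x.2 then 0 else T x.1 x.2) = 0 := by
    refine Finset.sum_ninvolution Prod.swap (fun x => ?_) (fun x hx => ?_) (fun _ => mem_univ _)
      Prod.swap_swap
    · by_cases h : x.1 = x.2
      · simp [h]
      · rw [if_neg h, Prod.fst_swap, Prod.snd_swap, if_neg (Ne.symm h), hT _ _ h,
          neg_add_cancel]
    · contrapose! hx
      exact if_pos (congrArg Prod.fst hx).symm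
  rw [Fintype.sum_prod_type' (fun i l => if i = l then (0 : M) else T i l)] at hoff
  calc ∑ i, ∑ l, T i l
      = ∑ i, ∑ l, ((if i = l then T i l else 0) + if i = l then 0 else T i l) :=
        Finset.sum_congr rfl fun i _ => Finset.sum_congr rfl fun l _ => by split_ifs <;> simp
    _ = ∑ i, T i i := by
      simp only [Finset.sum_add_distrib, Finset.sum_ite_eq, mem_univ, if_true, hoff, add_zero]

section KoszulComplex

variable {k : ℕ}

lemma flipAt_apply_self (i : Fin k) (ε : Fin k → Bool) : flipAt i ε i = !ε i :=
  Function.update_self i _ ε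

lemma flipAt_apply_of_ne {i l : Fin k} (h : l ≠ i) (ε : Fin k → Bool) : flipAt i ε l = ε l :=
  Function.update_of_ne h _ ε

@[simp]
lemma flipAt_flipAt (i : Fin k) (ε : Fin k → Bool) : flipAt i (flipAt i ε) = ε := by
  simp [flipAt]

lemma flipAt_comm {i l : Fin k} (h : i ≠ l) (ε : Fin k → Bool) :
    flipAt i (flipAt l ε) = flipAt l (flipAt i ε) := by
  simp [flipAt, Function.update_of_ne h, Function.update_of_ne h.symm, Function.update_comm h]

lemma card_filter_flipAt_eq_add_one_or {P : Fin k → Prop} [DecidablePred P] {l : Fin k}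
    (hl : P l) (ε : Fin k → Bool) :
    #{m | P m ∧ flipAt l ε m} = #{m | P m ∧ ε m} + 1 ∨
      #{m | P m ∧ ε m} = #{m | P m ∧ flipAt l ε m} + 1 := by
  have key : ∀ ε' : Fin k → Bool, ε' l = false →
      #{m | P m ∧ flipAt l ε' m} = #{m | P m ∧ ε' m} + 1 := fun ε' hε' => by
    rw [← Finset.card_insert_of_notMem (a := l) (by simp [hε'])]
    congr 1
    ext m
    rcases eq_or_ne m l with rfl | hm
    · simp [flipAt_apply_self, hε', hl]
    · simp [flipAt_apply_of_ne hm, hm]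
  cases hε : ε l
  · exact .inl (key ε hε)
  · refine .inr ?_
    simpa using key (flipAt l ε) (by simp [flipAt_apply_self, hε])

lemma bparity_flipAt (i : Fin k) (ε : Fin k → Bool) :
    bparity (flipAt i ε) = bparity ε + 1 := by
  unfold bparity
  rcases card_filter_flipAt_eq_add_one_or (P := fun _ => True) trivial ε (l := i) with h | h <;>
    simp only [true_and] at h <;> rw [h] <;> push_cast
  · rfl
  · rw [CharTwo.add_cancel_right]

variable (R : Type*) [CommRing R]

lemma koszulSign_mul_self (i : Fin k) (ε : Fin k → Bool) :
    koszulSign R i ε * koszulSign R i ε = 1 := by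
  rw [koszulSign, ← mul_pow, neg_mul_neg, one_mul, one_pow]

lemma koszulSign_flipAt_of_le {i l : Fin k} (h : i ≤ l) (ε : Fin k → Bool) :
    koszulSign R i (flipAt l ε) = koszulSign R i ε := by
  unfold koszulSign
  congr 3
  ext m
  rcases eq_or_ne m l with rfl | hm
  · simp [not_lt.2 h]
  · rw [flipAt_apply_of_ne hm]

lemma koszulSign_flipAt_of_lt {i l : Fin k} (h : l < i) (ε : Fin k → Bool) :
    koszulSign R i (flipAt l ε) = -koszulSign R i ε := by
  unfold koszulSign
  rcases card_filter_flipAt_eq_add_one_or (P := (· < i)) h ε with h | h <;> rw [h] <;> ring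

end KoszulComplex

section Differential

variable {R : Type*} [CommRing R] {k : ℕ} (a b : Fin k → R)

lemma koszulD_apply (f : (Fin k → Bool) → R) (η : Fin k → Bool) :
    koszulD a b f η = ∑ i : Fin k,
      koszulSign R i (flipAt i η) * koszulEntry a b i (flipAt i η) * f (flipAt i η) := rfl

lemma koszulEntry_flipAt_mul_self (i : Fin k) (ε : Fin k → Bool) :
    koszulEntry a b i (flipAt i ε) * koszulEntry a b i ε = a i * b i := by
  rw [koszulEntry, koszulEntry, flipAt_apply_self]
  cases ε i <;> simp [mul_comm]

lemma koszulD_mem_gradedPart {p : ZMod 2} {f : (Fin k → Bool) → R} (hf : f ∈ gradedPart R p) :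
    koszulD a b f ∈ gradedPart R (p + 1) := by
  intro η hη
  rw [koszulD_apply]
  refine Finset.sum_eq_zero fun i _ => ?_
  rw [hf (flipAt i η) fun h => hη (by rw [← h, bparity_flipAt, CharTwo.add_cancel_right]),
    mul_zero]

lemma koszulD_koszulD (hab : ∑ i, a i * b i = 0) (f : (Fin k → Bool) → R) :
    koszulD a b (koszulD a b f) = 0 := by
  funext η
  simp only [koszulD_apply, Finset.mul_sum, Pi.zero_apply]
  rw [Finset.sum_sum_eq_sum_diag_of_antisymm]
  · simp only [flipAt_flipAt, koszulSign_flipAt_of_le R le_rfl]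
    calc ∑ i, koszulSign R i η * koszulEntry a b i (flipAt i η) *
          (koszulSign R i η * koszulEntry a b i η * f η)
        = ∑ i, koszulSign R i η * koszulSign R i η *
            (koszulEntry a b i (flipAt i η) * koszulEntry a b i η) * f η :=
          Finset.sum_congr rfl fun i _ => by ring
      _ = 0 := by simp only [koszulSign_mul_self, koszulEntry_flipAt_mul_self, one_mul,
          ← Finset.sum_mul, hab, zero_mul]
  · intro i l h
    rw [flipAt_comm h.symm]
    simp only [koszulEntry, flipAt_apply_self, flipAt_apply_of_ne h, flipAt_apply_of_ne h.symm]
    rcases h.lt_or_gt with hil | hli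
    · simp only [koszulSign_flipAt_of_le R le_rfl, koszulSign_flipAt_of_lt R hil,
        koszulSign_flipAt_of_le R hil.le]
      ring
    · simp only [koszulSign_flipAt_of_le R le_rfl, koszulSign_flipAt_of_lt R hli,
        koszulSign_flipAt_of_le R hli.le]
      ring

end Differential

section Contraction

variable {R : Type*} [CommRing R] {k : ℕ} {a b : Fin k → R} {j : Fin k}

lemma isUnit_koszulSign (i : Fin k) (ε : Fin k → Bool) : IsUnit (koszulSign R i ε) :=
  isUnit_one.neg.pow _

lemma koszulD_apply_of_eq_zero_on_face {f : (Fin k → Bool) → R}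
    (hf : ∀ η, η j = false → f η = 0) {η : Fin k → Bool} (hη : η j = false) :
    koszulD a b f η = koszulSign R j η * b j * f (flipAt j η) := by
  rw [koszulD_apply, Finset.sum_eq_single j]
  · rw [koszulSign_flipAt_of_le R le_rfl, koszulEntry, flipAt_apply_self, hη]
    rfl
  · intro i _ hij
    rw [hf _ (by rw [flipAt_apply_of_ne (Ne.symm hij), hη]), mul_zero]
  · exact fun h => absurd (mem_univ j) h

lemma eq_zero_of_koszulD_eq_zero_of_eq_zero_on_face (hw : b j ∈ nonZeroDivisors R)
    {f : (Fin k → Bool) → R} (hd : koszulD a b f = 0) (hf : ∀ η, η j = false → f η = 0) :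
    f = 0 := by
  funext η
  cases hη : η j
  · exact hf η hη
  · have h := congrFun hd (flipAt j η)
    rw [koszulD_apply_of_eq_zero_on_face hf (by rw [flipAt_apply_self, hη]; rfl), flipAt_flipAt,
      Pi.zero_apply, mul_assoc, (isUnit_koszulSign j _).mul_right_eq_zero,
      mul_left_mem_nonZeroDivisors_eq_zero_iff hw] at h
    exact h

lemma exists_koszulD_eq_on_face (hw : b j ∈ nonZeroDivisors R) {p : ZMod 2}
    {f : (Fin k → Bool) → R} (hf : f ∈ gradedPart R p)
    (hdvd : ∀ η, η j = false → b j ∣ f η) :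
    ∃ h ∈ gradedPart R (p + 1), (∀ η, η j = false → h η = 0) ∧
      ∀ η, η j = false → koszulD a b h η = f η := by
  have hquot : ∀ η, ∃ x, η j = false → f η = b j * x := fun η => by
    by_cases hη : η j = false
    · exact (hdvd η hη).imp fun x hx _ => hx
    · exact ⟨0, fun h => absurd h hη⟩
  choose v hv using hquot
  let h : (Fin k → Bool) → R := fun η => if η j then koszulSign R j η * v (flipAt j η) else 0
  have hface : ∀ η, η j = false → h η = 0 := fun η hη => by simp [h, hη]
  refine ⟨h, fun η hη => ?_, hface, fun η hη => ?_⟩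
  · simp only [h]
    split_ifs with hηj
    · have hflip : flipAt j η j = false := by rw [flipAt_apply_self, hηj]; rfl
      have hzero : f (flipAt j η) = 0 := hf _ fun h =>
        hη (by rw [← h, bparity_flipAt, CharTwo.add_cancel_right])
      rw [hv _ hflip, mul_left_mem_nonZeroDivisors_eq_zero_iff hw] at hzero
      rw [hzero, mul_zero]
    · rfl
  · rw [koszulD_apply_of_eq_zero_on_face hface hη]
    simp only [h]
    rw [flipAt_apply_self, hη, Bool.not_false, if_pos rfl, flipAt_flipAt,
      koszulSign_flipAt_of_le R le_rfl, hv η hη]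
    linear_combination (b j * v η) * koszulSign_mul_self R j η

lemma exists_koszulD_eq_of_dvd (hab : ∑ i, a i * b i = 0) (hw : b j ∈ nonZeroDivisors R)
    {p : ZMod 2} {f : (Fin k → Bool) → R} (hf : f ∈ koszulCycles a b p)
    (hdvd : ∀ η, η j = false → b j ∣ f η) :
    ∃ h ∈ gradedPart R (p + 1), (∀ η, η j = false → h η = 0) ∧ koszulD a b h = f := by
  obtain ⟨hd, hgr⟩ := Submodule.mem_inf.1 hf
  obtain ⟨h, hgr', hface, hdh⟩ := exists_koszulD_eq_on_face (a := a) hw hgr hdvd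
  refine ⟨h, hgr', hface, (sub_eq_zero.1 ?_).symm⟩
  refine eq_zero_of_koszulD_eq_zero_of_eq_zero_on_face (a := a) hw ?_ fun η hη => ?_
  · rw [map_sub, LinearMap.mem_ker.1 hd, koszulD_koszulD a b hab, sub_zero]
  · rw [Pi.sub_apply, hdh η hη, sub_self]

end Contraction

section Face

variable {R S : Type*} [CommRing R] [CommRing S] {k : ℕ}

lemma bparity_insertNth_false (j : Fin (k + 1)) (γ : Fin k → Bool) :
    bparity (j.insertNth false γ) = bparity γ := by
  rw [bparity, bparity, Finset.card_filter, Finset.card_filter, Fin.sum_univ_succAbove _ j]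
  simp only [Fin.insertNth_apply_same, Fin.insertNth_apply_succAbove]
  simp

lemma koszulSign_succAbove_insertNth_false (j : Fin (k + 1)) (i : Fin k) (γ : Fin k → Bool) :
    koszulSign R (j.succAbove i) (j.insertNth false γ) = koszulSign R i γ := by
  rw [koszulSign, koszulSign, Finset.card_filter, Finset.card_filter,
    Fin.sum_univ_succAbove _ j]
  simp only [Fin.insertNth_apply_same, Fin.insertNth_apply_succAbove,
    Fin.succAbove_lt_succAbove_iff]
  simp

lemma flipAt_succAbove_insertNth (j : Fin (k + 1)) (i : Fin k) (x : Bool) (γ : Fin k → Bool) :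
    flipAt (j.succAbove i) (j.insertNth x γ) = j.insertNth x (flipAt i γ) := by
  simp [flipAt, Fin.insertNth_apply_succAbove]

def restrictFace (π : R →+* S) (j : Fin (k + 1)) :
    ((Fin (k + 1) → Bool) → R) →ₛₗ[π] ((Fin k → Bool) → S) where
  toFun f ε := π (f (j.insertNth false ε))
  map_add' f g := by
    funext ε
    simp
  map_smul' r f := by
    funext ε
    simp

variable (π : R →+* S) (j : Fin (k + 1))

lemma restrictFace_apply (f : (Fin (k + 1) → Bool) → R) (ε : Fin k → Bool) :
    restrictFace π j f ε = π (f (j.insertNth false ε)) := rfl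

lemma restrictFace_mem_gradedPart {p : ZMod 2} {f : (Fin (k + 1) → Bool) → R}
    (hf : f ∈ gradedPart R p) : restrictFace π j f ∈ gradedPart S p := fun ε hε => by
  rw [restrictFace_apply, hf _ (by rwa [bparity_insertNth_false]), map_zero]

lemma dvd_apply_of_restrictFace_eq_zero {w : R} (hker : RingHom.ker π = Ideal.span {w})
    {f : (Fin (k + 1) → Bool) → R} (hf : restrictFace π j f = 0) {η : Fin (k + 1) → Bool}
    (hη : η j = false) : w ∣ f η := by
  have h := congrFun hf (j.removeNth η)
  rw [restrictFace_apply, ← hη, Fin.insertNth_self_removeNth] at h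
  exact Ideal.mem_span_singleton.1 (hker ▸ RingHom.mem_ker.2 h)

lemma exists_restrictFace_eq (hπ : Function.Surjective π) {p : ZMod 2}
    {g : (Fin k → Bool) → S} (hg : g ∈ gradedPart S p) :
    ∃ f ∈ gradedPart R p, restrictFace π j f = g := by
  refine ⟨fun η => if bparity η = p then Function.surjInv hπ (g (j.removeNth η)) else 0,
    fun η hη => if_neg hη, funext fun ε => ?_⟩
  rw [restrictFace_apply, bparity_insertNth_false, Fin.removeNth_insertNth]
  split_ifs with hε
  · exact Function.surjInv_eq hπ _
  · rw [map_zero, hg ε hε]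

lemma map_koszulSign {n : ℕ} (i : Fin n) (ε : Fin n → Bool) :
    π (koszulSign R i ε) = koszulSign S i ε := by
  rw [koszulSign, koszulSign, map_pow, map_neg, map_one]

variable {a b : Fin (k + 1) → R}

lemma restrictFace_koszulD (hb : π (b j) = 0) (f : (Fin (k + 1) → Bool) → R) :
    restrictFace π j (koszulD a b f) =
      koszulD (fun i => π (a (j.succAbove i))) (fun i => π (b (j.succAbove i)))
        (restrictFace π j f) := by
  funext ε
  rw [restrictFace_apply, koszulD_apply, map_sum, Fin.sum_univ_succAbove _ j, koszulD_apply]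
  have hentry : koszulEntry a b j (flipAt j (j.insertNth false ε)) = b j := by
    rw [koszulEntry, flipAt_apply_self, Fin.insertNth_apply_same]
    rfl
  rw [map_mul, map_mul, hentry, hb, mul_zero, zero_mul, zero_add]
  refine Finset.sum_congr rfl fun i _ => ?_
  simp only [flipAt_succAbove_insertNth, map_mul, koszulSign_succAbove_insertNth_false,
    koszulEntry, Fin.insertNth_apply_succAbove, restrictFace_apply]
  rw [map_koszulSign, apply_ite π]

end Face

section QuasiIso

variable {R S : Type*} [CommRing R] [CommRing S] {k : ℕ} {π : R →+* S} {j : Fin (k + 1)}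
  {a b : Fin (k + 1) → R}

lemma sum_map_mul_succAbove_eq_zero (hab : ∑ i, a i * b i = 0) (hb : π (b j) = 0) :
    ∑ i, π (a (j.succAbove i)) * π (b (j.succAbove i)) = 0 := by
  have h := congrArg π hab
  rw [map_sum, map_zero, Fin.sum_univ_succAbove _ j, map_mul, hb, mul_zero, zero_add] at h
  simpa only [map_mul] using h

lemma map_eq_zero_of_ker_eq_span {w : R} (hker : RingHom.ker π = Ideal.span {w}) : π w = 0 :=
  RingHom.mem_ker.1 (hker ▸ Ideal.mem_span_singleton_self w)

variable (hπ : Function.Surjective π) (hker : RingHom.ker π = Ideal.span {b j})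
  (hw : b j ∈ nonZeroDivisors R) (hab : ∑ i, a i * b i = 0)
include hπ hker hw hab

lemma mem_koszulBoundaries_of_restrictFace_mem {p : ZMod 2} {f : (Fin (k + 1) → Bool) → R}
    (hf : f ∈ koszulCycles a b p)
    (hΦf : restrictFace π j f ∈
      koszulBoundaries (fun i => π (a (j.succAbove i))) (fun i => π (b (j.succAbove i))) p) :
    f ∈ koszulBoundaries a b p := by
  have hb := map_eq_zero_of_ker_eq_span hker
  obtain ⟨g', hg', hdg⟩ := Submodule.mem_map.1 hΦf
  obtain ⟨g, hg, rfl⟩ := exists_restrictFace_eq π j hπ hg'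
  obtain ⟨hfd, hfp⟩ := Submodule.mem_inf.1 hf
  have hu : f - koszulD a b g ∈ koszulCycles a b p := by
    refine Submodule.mem_inf.2 ⟨?_, sub_mem hfp ?_⟩
    · rw [LinearMap.mem_ker, map_sub, LinearMap.mem_ker.1 hfd, koszulD_koszulD a b hab, sub_zero]
    · simpa only [CharTwo.add_cancel_right] using koszulD_mem_gradedPart a b hg
  have hΦu : restrictFace π j (f - koszulD a b g) = 0 := by
    rw [map_sub, restrictFace_koszulD π j hb, hdg, sub_self]
  obtain ⟨h, hh, -, hdh⟩ := exists_koszulD_eq_of_dvd hab hw hu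
    fun η hη => dvd_apply_of_restrictFace_eq_zero π j hker hΦu hη
  exact Submodule.mem_map.2 ⟨g + h, add_mem hg hh, by rw [map_add, hdh, add_sub_cancel]⟩

lemma exists_restrictFace_sub_mem_koszulBoundaries {p : ZMod 2} {g : (Fin k → Bool) → S}
    (hg : g ∈ koszulCycles (fun i => π (a (j.succAbove i))) (fun i => π (b (j.succAbove i))) p) :
    ∃ f ∈ koszulCycles a b p, restrictFace π j f - g ∈
      koszulBoundaries (fun i => π (a (j.succAbove i))) (fun i => π (b (j.succAbove i))) p := by
  have hb := map_eq_zero_of_ker_eq_span hker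
  obtain ⟨hgd, hgp⟩ := Submodule.mem_inf.1 hg
  obtain ⟨f, hf, hΦf⟩ := exists_restrictFace_eq π j hπ hgp
  have hdf : koszulD a b f ∈ koszulCycles a b (p + 1) :=
    Submodule.mem_inf.2 ⟨koszulD_koszulD a b hab f, koszulD_mem_gradedPart a b hf⟩
  have hΦdf : restrictFace π j (koszulD a b f) = 0 := by
    rw [restrictFace_koszulD π j hb, hΦf, LinearMap.mem_ker.1 hgd]
  obtain ⟨h, hh, hface, hdh⟩ := exists_koszulD_eq_of_dvd hab hw hdf
    fun η hη => dvd_apply_of_restrictFace_eq_zero π j hker hΦdf hη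
  have hΦh : restrictFace π j h = 0 := funext fun ε => by
    rw [restrictFace_apply, hface _ (Fin.insertNth_apply_same _ _ _), map_zero, Pi.zero_apply]
  refine ⟨f - h, Submodule.mem_inf.2 ⟨?_, sub_mem hf ?_⟩, ?_⟩
  · rw [LinearMap.mem_ker, map_sub, hdh, sub_self]
  · simpa only [CharTwo.add_cancel_right] using hh
  · rw [map_sub, hΦf, hΦh, sub_zero, sub_self]
    exact zero_mem _

end QuasiIso

section Elimination

variable {m : ℕ} (c : MvPolynomial (Fin m) ℚ)

lemma finSuccEquiv_rename_succ (u : MvPolynomial (Fin m) ℚ) :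
    finSuccEquiv ℚ m (rename Fin.succ u) = Polynomial.C u := by
  rw [finSuccEquiv_apply, coe_eval₂Hom, eval₂_rename]
  exact (eval₂_comp_left Polynomial.C C X u).symm.trans (by rw [eval₂_eta])

lemma elimHom_apply_eq_eval_finSuccEquiv (u : MvPolynomial (Fin (m + 1)) ℚ) :
    elimHom m c u = (finSuccEquiv ℚ m u).eval c := by
  have h : (elimHom m c : MvPolynomial (Fin (m + 1)) ℚ →+* MvPolynomial (Fin m) ℚ) =
      (Polynomial.evalRingHom c).comp (finSuccEquiv ℚ m : _ →+* _) := by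
    refine MvPolynomial.ringHom_ext (fun r => ?_) (fun i => ?_)
    · simp [elimHom, finSuccEquiv_apply]
    · cases i using Fin.cases <;> simp [elimHom, finSuccEquiv_X_zero, finSuccEquiv_X_succ]
  exact DFunLike.congr_fun h u

lemma elimHom_rename (u : MvPolynomial (Fin m) ℚ) : elimHom m c (rename Fin.succ u) = u := by
  rw [elimHom_apply_eq_eval_finSuccEquiv, finSuccEquiv_rename_succ, Polynomial.eval_C]

lemma elimHom_surjective : Function.Surjective (elimHom m c) :=
  fun u => ⟨rename Fin.succ u, elimHom_rename c u⟩

lemma finSuccEquiv_X_zero_sub_rename :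
    finSuccEquiv ℚ m (X 0 - rename Fin.succ c) = Polynomial.X - Polynomial.C c := by
  rw [map_sub, finSuccEquiv_X_zero, finSuccEquiv_rename_succ]

lemma ker_elimHom :
    RingHom.ker (elimHom m c : MvPolynomial (Fin (m + 1)) ℚ →+* MvPolynomial (Fin m) ℚ) =
      Ideal.span {X 0 - rename Fin.succ c} := by
  ext u
  rw [RingHom.mem_ker, RingHom.coe_coe, Ideal.mem_span_singleton,
    ← map_dvd_iff (finSuccEquiv ℚ m), finSuccEquiv_X_zero_sub_rename, Polynomial.dvd_iff_isRoot,
    Polynomial.IsRoot, elimHom_apply_eq_eval_finSuccEquiv]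

lemma X_zero_sub_rename_mem_nonZeroDivisors :
    (X 0 - rename Fin.succ c : MvPolynomial (Fin (m + 1)) ℚ) ∈ nonZeroDivisors _ := by
  refine mem_nonZeroDivisors_of_ne_zero fun h => Polynomial.X_sub_C_ne_zero c ?_
  rw [← finSuccEquiv_X_zero_sub_rename, h, map_zero]

end Elimination

lemma elimPhi_eq_restrictFace (m k : ℕ) (c : MvPolynomial (Fin m) ℚ) (j : Fin (k + 1)) :
    elimPhi m k c j =
      restrictFace (elimHom m c : MvPolynomial (Fin (m + 1)) ℚ →+* MvPolynomial (Fin m) ℚ) j :=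
  rfl

/-- elimination of a variable, `b`-entry linear.
Let `R = ℚ[z₁,…,z_{m+1}]`, `R' = ℚ[z₂,…,z_{m+1}]`, and let `a, b : Fin (k+1) → R`
with `Σᵢ aᵢbᵢ = 0` and `bⱼ = z₁ − c` where `c ∈ R'`.  Let `π : R → R'` be the
`ℚ`-algebra map with `π(z₁) = c` fixing the other variables, and let `M'` be the folded
Koszul complex over `R'` with rows `(π(aᵢ), π(bᵢ))` for `i ≠ j`.  Then
`Σ_{i≠j} π(aᵢ)π(bᵢ) = 0`, and the map `Φ` is additive, `R'`-linear (for the `R'`-module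
structure on `K(a,b)` coming from `R' ↪ R`), a chain map of `ℤ/2`-graded complexes
(it commutes with the differentials and preserves the grading), and a
quasi-isomorphism: it induces isomorphisms of `R'`-modules on homology in both
`ℤ/2`-degrees (injectivity and surjectivity of the induced map on homology are the
last two conjuncts). -/
theorem variable_elimination_quasi_iso (m k : ℕ)
    (a b : Fin (k + 1) → MvPolynomial (Fin (m + 1)) ℚ)
    (hab : ∑ i, a i * b i = 0)
    (j : Fin (k + 1)) (c : MvPolynomial (Fin m) ℚ)
    (hbj : b j = MvPolynomial.X 0 - MvPolynomial.rename Fin.succ c)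
    (a' b' : Fin k → MvPolynomial (Fin m) ℚ)
    (ha' : ∀ i, a' i = elimHom m c (a (j.succAbove i)))
    (hb' : ∀ i, b' i = elimHom m c (b (j.succAbove i))) :
    (∑ i, a' i * b' i = 0) ∧
    (∀ f g, elimPhi m k c j (f + g) = elimPhi m k c j f + elimPhi m k c j g) ∧
    (∀ (r : MvPolynomial (Fin m) ℚ) f,
        elimPhi m k c j (MvPolynomial.rename Fin.succ r • f) = r • elimPhi m k c j f) ∧
    (∀ f, elimPhi m k c j (koszulD a b f) = koszulD a' b' (elimPhi m k c j f)) ∧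
    (∀ (p : ZMod 2) f, f ∈ gradedPart (MvPolynomial (Fin (m + 1)) ℚ) p →
        elimPhi m k c j f ∈ gradedPart (MvPolynomial (Fin m) ℚ) p) ∧
    (∀ (p : ZMod 2) f, f ∈ koszulCycles a b p →
        elimPhi m k c j f ∈ koszulBoundaries a' b' p → f ∈ koszulBoundaries a b p) ∧
    (∀ (p : ZMod 2) g, g ∈ koszulCycles a' b' p →
        ∃ f ∈ koszulCycles a b p, elimPhi m k c j f - g ∈ koszulBoundaries a' b' p) := by
  obtain rfl : a' = fun i => elimHom m c (a (j.succAbove i)) := funext ha'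
  obtain rfl : b' = fun i => elimHom m c (b (j.succAbove i)) := funext hb'
  have hker : RingHom.ker
      (elimHom m c : MvPolynomial (Fin (m + 1)) ℚ →+* MvPolynomial (Fin m) ℚ) =
        Ideal.span {b j} := by
    rw [hbj]
    exact ker_elimHom c
  have hw : b j ∈ nonZeroDivisors _ := hbj ▸ X_zero_sub_rename_mem_nonZeroDivisors c
  have hπb := map_eq_zero_of_ker_eq_span hker
  rw [elimPhi_eq_restrictFace]
  refine ⟨sum_map_mul_succAbove_eq_zero hab hπb, map_add _, fun r f => ?_,
    restrictFace_koszulD _ j hπb, fun p f => restrictFace_mem_gradedPart _ j,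
    fun p f => mem_koszulBoundaries_of_restrictFace_mem (elimHom_surjective c) hker hw hab,
    fun p g => exists_restrictFace_sub_mem_koszulBoundaries (elimHom_surjective c) hker hw hab⟩
  rw [map_smulₛₗ, RingHom.coe_coe, elimHom_rename]
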